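/- arXiv:hep-th/9501138 — 3 statements merged into one kernel-verified Lean document; each statement's English description precedes it below -/
import Mathlib

section
/- The scattering matrix S satisfies the unitarity relation: for all ζ ∈ ℂ∖{0} such that all the infinite-product denominators occurring in S₀(ζ) and S₀(ζ⁻¹) are nonzero and 1 − ζ²q² ≠ 0 and 1 − ζ⁻²q² ≠ 0, one has S₁₂(ζ) S₂₁(ζ⁻¹) = id on V ⊗ V, where S₂₁(ζ) := P S(ζ) P. In particular R(ζ)·(P R(ζ⁻¹) P) = id. -/
noncomputable section

open scoped BigOperators

/-- The infinite q-Pochhammer symbol `(a; p)_∞ = ∏_{k ≥ 0} (1 - a pᵏ)`. -/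
def qPoch (a p : ℂ) : ℂ := ∏' k : ℕ, (1 - a * p ^ k)

/-- The double infinite q-Pochhammer symbol `(a; p, p)_∞ = ∏_{k,l ≥ 0} (1 - a p^{k+l})`. -/
def qPoch2 (a p : ℂ) : ℂ := ∏' kl : ℕ × ℕ, (1 - a * p ^ (kl.1 + kl.2))

/-- `θ(z|p) = (z;p)_∞ (p/z;p)_∞`. -/
def theta (z p : ℂ) : ℂ := qPoch z p * qPoch (p / z) p

/-- `t(ζ) = ζ⁻¹ θ(qζ²|q⁴)/θ(qζ⁻²|q⁴)`. -/
def tfun (q ζ : ℂ) : ℂ := ζ⁻¹ * theta (q * ζ ^ 2) (q ^ 4) / theta (q * (ζ ^ 2)⁻¹) (q ^ 4)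

/-- `b(ζ) = (1-ζ²)q/(1-ζ²q²)`. -/
def Rb (q ζ : ℂ) : ℂ := (1 - ζ ^ 2) * q / (1 - ζ ^ 2 * q ^ 2)

/-- `c(ζ) = (1-q²)ζ/(1-ζ²q²)`. -/
def Rc (q ζ : ℂ) : ℂ := (1 - q ^ 2) * ζ / (1 - ζ ^ 2 * q ^ 2)

/-- The six-vertex R-matrix; the index `0 : Fin 2` encodes `+` and `1 : Fin 2` encodes `−`.
Rows are the upper (outgoing) indices, columns the lower (incoming) indices. -/
def Rmat (q ζ : ℂ) : Matrix (Fin 2 × Fin 2) (Fin 2 × Fin 2) ℂ :=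
  Matrix.of fun e f =>
    if e.1 = e.2 then (if f = e then 1 else 0)
    else if f = e then Rb q ζ
    else if f = (e.2, e.1) then Rc q ζ
    else 0

/-- The transposition `P(x⊗y) = y⊗x` on `V ⊗ V`. -/
def Pmat : Matrix (Fin 2 × Fin 2) (Fin 2 × Fin 2) ℂ :=
  Matrix.of fun e f => if f = (e.2, e.1) then 1 else 0

/-- The scalar factor `S₀(ζ)` with `z = ζ²`. -/
def S0 (q ζ : ℂ) : ℂ :=
  ζ * qPoch (ζ ^ 2)⁻¹ (q ^ 4) * qPoch (ζ ^ 2 * q ^ 2) (q ^ 4) /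
    (qPoch (ζ ^ 2) (q ^ 4) * qPoch ((ζ ^ 2)⁻¹ * q ^ 2) (q ^ 4))

/-- The scattering matrix `S(ζ) = S₀(ζ) R(ζ)`. -/
def Smat (q ζ : ℂ) : Matrix (Fin 2 × Fin 2) (Fin 2 × Fin 2) ℂ := S0 q ζ • Rmat q ζ

/-- Admissibility of the argument of the S-matrix: all denominators occurring in
`S(ζ)` are nonzero. -/
def Sdef (q ζ : ℂ) : Prop :=
  ζ ≠ 0 ∧ 1 - ζ ^ 2 * q ^ 2 ≠ 0 ∧ qPoch (ζ ^ 2) (q ^ 4) ≠ 0 ∧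
    qPoch ((ζ ^ 2)⁻¹ * q ^ 2) (q ^ 4) ≠ 0

/-- Kronecker (tensor) product of two operators on `V`. -/
def kron (A B : Matrix (Fin 2) (Fin 2) ℂ) : Matrix (Fin 2 × Fin 2) (Fin 2 × Fin 2) ℂ :=
  Matrix.of fun e f => A e.1 f.1 * B e.2 f.2

/-- `D = diag(δ, δ⁻¹)`. -/
def Dmat (δ : ℂ) : Matrix (Fin 2) (Fin 2) ℂ :=
  Matrix.of fun i j => if i = j then (if i = 0 then δ else δ⁻¹) else 0

/-- `D̄ = diag(δ, −δ⁻¹)`. -/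
def Dbar (δ : ℂ) : Matrix (Fin 2) (Fin 2) ℂ :=
  Matrix.of fun i j => if i = j then (if i = 0 then δ else -δ⁻¹) else 0

/-- The operator on `V^{⊗N}` acting as `M` on the `(j,k)`-th tensor factors and as the
identity elsewhere.  A vector of `V^{⊗N}` is encoded by its coordinates
`(Fin N → Fin 2) → ℂ` in the basis `v_{ε₁} ⊗ ⋯ ⊗ v_{ε_N}`. -/
def embed2 {N : ℕ} (M : Matrix (Fin 2 × Fin 2) (Fin 2 × Fin 2) ℂ) (j k : Fin N) :
    Matrix (Fin N → Fin 2) (Fin N → Fin 2) ℂ :=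
  Matrix.of fun a b =>
    M (a j, a k) (b j, b k) *
      ∏ i : Fin N, (if i = j ∨ i = k then 1 else if a i = b i then 1 else 0)

/-- The operator on `V^{⊗N}` acting as `M` on the `j`-th tensor factor. -/
def embed1 {N : ℕ} (M : Matrix (Fin 2) (Fin 2) ℂ) (j : Fin N) :
    Matrix (Fin N → Fin 2) (Fin N → Fin 2) ℂ :=
  Matrix.of fun a b =>
    M (a j) (b j) * ∏ i : Fin N, (if i = j then 1 else if a i = b i then 1 else 0)

/-- Number of `−` signs (i.e. of indices equal to `1`) in a basis configuration. -/
def countMinus {N : ℕ} (a : Fin N → Fin 2) : ℕ :=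
  (Finset.univ.filter fun i => a i = 1).card

/-- Membership in the weight subspace `V^{(n l)} ⊆ V^{⊗N}` (with `l = N - n`):
the coordinates vanish off configurations with exactly `n` minus signs. -/
def inVnl {N : ℕ} (n : ℕ) (v : (Fin N → Fin 2) → ℂ) : Prop :=
  ∀ a, countMinus a ≠ n → v a = 0

/-- The vector `w ⊗ u_σ ∈ V^{⊗N}`, where `w ∈ V^{⊗(N-2)}` occupies the slots `0,…,N-3`
and `u_σ = v₋⊗v₊ + σ v₊⊗v₋` occupies the slots `N-2, N-1`. -/
def tensU {N : ℕ} (hN : 2 ≤ N) (σ : ℂ) (w : (Fin (N - 2) → Fin 2) → ℂ) :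
    (Fin N → Fin 2) → ℂ :=
  fun a =>
    w (fun i => a ⟨i.1, by have := i.isLt; omega⟩) *
      (if a ⟨N - 2, by omega⟩ = 1 ∧ a ⟨N - 1, by omega⟩ = 0 then 1
       else if a ⟨N - 2, by omega⟩ = 0 ∧ a ⟨N - 1, by omega⟩ = 1 then σ else 0)

/-- `P₁₂ P₂₃ ⋯ P_{N−1,N}` on `V^{⊗N}` (1-based labels; 0-based sites `0,…,N-1`). -/
def Pchain (N : ℕ) : Matrix (Fin N → Fin 2) (Fin N → Fin 2) ℂ :=
  (List.ofFn fun t : Fin (N - 1) =>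
    embed2 Pmat ⟨t.1, by have := t.isLt; omega⟩ ⟨t.1 + 1, by have := t.isLt; omega⟩).prod

/-- `S_{1,…,N−2|N−1}(ζ₁,…,ζ_{N−2}|w) = S_{1,N−1}(ζ₁/w) ⋯ S_{N−2,N−1}(ζ_{N−2}/w)`
(1-based labels; the `j`-th spectral parameter `ζ_j` is `ζ (j-1)`). -/
def SchainUp (q : ℂ) (N : ℕ) (ζ : ℕ → ℂ) (w : ℂ) :
    Matrix (Fin N → Fin 2) (Fin N → Fin 2) ℂ :=
  (List.ofFn fun t : Fin (N - 2) =>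
    embed2 (Smat q (ζ t.1 / w)) ⟨t.1, by have := t.isLt; omega⟩
      ⟨N - 2, by have := t.isLt; omega⟩).prod

/-- `S_{N−1|1,…,N−2}(w|ζ₁,…,ζ_{N−2}) = S_{N−1,N−2}(w/ζ_{N−2}) ⋯ S_{N−1,1}(w/ζ₁)`. -/
def SchainDown (q : ℂ) (N : ℕ) (ζ : ℕ → ℂ) (w : ℂ) :
    Matrix (Fin N → Fin 2) (Fin N → Fin 2) ℂ :=
  (List.ofFn fun t : Fin (N - 2) =>
    embed2 (Smat q (w / ζ (N - 3 - t.1))) ⟨N - 2, by have := t.isLt; omega⟩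
      ⟨N - 3 - t.1, by have := t.isLt; omega⟩).prod

/-- `R_{N−1|1,…,N−2}(w|ζ₁,…,ζ_{N−2}) = R_{N−1,N−2}(w/ζ_{N−2}) ⋯ R_{N−1,1}(w/ζ₁)`. -/
def RchainDown (q : ℂ) (N : ℕ) (ζ : ℕ → ℂ) (w : ℂ) :
    Matrix (Fin N → Fin 2) (Fin N → Fin 2) ℂ :=
  (List.ofFn fun t : Fin (N - 2) =>
    embed2 (Rmat q (w / ζ (N - 3 - t.1))) ⟨N - 2, by have := t.isLt; omega⟩
      ⟨N - 3 - t.1, by have := t.isLt; omega⟩).prod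

/-- `R_{1,…,M−1|M}(ζ₁,…,ζ_{M−1}|w) = R_{1,M}(ζ₁/w) ⋯ R_{M−1,M}(ζ_{M−1}/w)` on `V^{⊗M}`. -/
def RchainUp (q : ℂ) (M : ℕ) (ζ : ℕ → ℂ) (w : ℂ) :
    Matrix (Fin M → Fin 2) (Fin M → Fin 2) ℂ :=
  (List.ofFn fun t : Fin (M - 1) =>
    embed2 (Rmat q (ζ t.1 / w)) ⟨t.1, by have := t.isLt; omega⟩
      ⟨M - 1, by have := t.isLt; omega⟩).prod

/-- The action of `Δ^{(M-1)}(f₀)` on the tensor product of evaluation representations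
with parameters `ζ 0, …, ζ (M-1)`:
`π(f₀) = Σ_j 1^{⊗j} ⊗ π_{ζ_j}(f₀) ⊗ π(t₀⁻¹) ⊗ ⋯ ⊗ π(t₀⁻¹)`, where
`π_ζ(f₀)v₊ = 0`, `π_ζ(f₀)v₋ = ζ⁻¹v₊`, `π_ζ(t₀⁻¹)v₊ = q v₊`, `π_ζ(t₀⁻¹)v₋ = q⁻¹ v₋`. -/
def f0op (q : ℂ) (M : ℕ) (ζ : ℕ → ℂ) : Matrix (Fin M → Fin 2) (Fin M → Fin 2) ℂ :=
  ∑ j : Fin M, Matrix.of fun a b =>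
    (if a j = 0 ∧ b j = 1 then (ζ j.1)⁻¹ else 0) *
      ∏ i : Fin M,
        (if i < j then (if a i = b i then 1 else 0)
         else if j < i then (if a i = b i then (if b i = 0 then q else q⁻¹) else 0)
         else 1)

/-- `M = tr_{N−1}( D̄_{N−1} R_{1,…,N−2|N−1}(ζ₁,…,ζ_{N−2}|ζ_{N−1}) ) ∈ End(V^{⊗(N−2)})`:
partial trace over the last factor of `V^{⊗(N-1)}`. -/
def Mop (q δ : ℂ) (N : ℕ) (hN : 3 ≤ N) (ζ : ℕ → ℂ) :
    Matrix (Fin (N - 2) → Fin 2) (Fin (N - 2) → Fin 2) ℂ :=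
  Matrix.of fun a b => ∑ e : Fin 2,
    (embed1 (N := N - 1) (Dbar δ) ⟨N - 2, by omega⟩ * RchainUp q (N - 1) ζ (ζ (N - 2)))
      (fun i => if h : i.1 < N - 2 then a ⟨i.1, h⟩ else e)
      (fun i => if h : i.1 < N - 2 then b ⟨i.1, h⟩ else e)

/-! Both entries `b` and `c` of `R(ζ)` are symmetric under swapping the two tensor factors,
so `P R(ζ) P = R(ζ)` and `S₂₁ = S`. Unitarity of `R` then reduces, on the block spanned by
`v₊ ⊗ v₋` and `v₋ ⊗ v₊`, to the scalar identities `b(ζ)b(ζ⁻¹) + c(ζ)c(ζ⁻¹) = 1` and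
`b(ζ)c(ζ⁻¹) + c(ζ)b(ζ⁻¹) = 0`. Inverting `ζ` swaps the Pochhammer symbols in the numerator
and denominator of `S₀`, so `S₀(ζ) S₀(ζ⁻¹) = ζ ζ⁻¹ = 1`. -/

lemma Pmat_mul_Rmat_mul_Pmat (q ζ : ℂ) : Pmat * Rmat q ζ * Pmat = Rmat q ζ := by
  ext ⟨a, b⟩ ⟨c, d⟩
  simp only [Matrix.mul_apply, Fintype.sum_prod_type, Fin.sum_univ_two, Rmat, Pmat,
    Matrix.of_apply, Prod.mk.injEq]
  fin_cases a <;> fin_cases b <;> fin_cases c <;> fin_cases d <;> simp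

lemma Pmat_mul_Smat_mul_Pmat (q ζ : ℂ) : Pmat * Smat q ζ * Pmat = Smat q ζ := by
  rw [Smat, Matrix.mul_smul, Matrix.smul_mul, Pmat_mul_Rmat_mul_Pmat]

lemma Rmat_mul_Rmat_eq_one {q ζ ζ' : ℂ}
    (hdiag : Rb q ζ * Rb q ζ' + Rc q ζ * Rc q ζ' = 1)
    (hoff : Rb q ζ * Rc q ζ' + Rc q ζ * Rb q ζ' = 0) :
    Rmat q ζ * Rmat q ζ' = 1 := by
  ext ⟨a, b⟩ ⟨c, d⟩
  simp only [Matrix.mul_apply, Fintype.sum_prod_type, Fin.sum_univ_two, Rmat,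
    Matrix.of_apply, Matrix.one_apply, Prod.mk.injEq]
  fin_cases a <;> fin_cases b <;> fin_cases c <;> fin_cases d <;> norm_num <;>
    first
    | linear_combination hdiag
    | linear_combination hoff

lemma one_sub_inv_sq_mul_sq_ne_zero {q ζ : ℂ} (hζ : ζ ≠ 0) (h : 1 - ζ⁻¹ ^ 2 * q ^ 2 ≠ 0) :
    ζ ^ 2 - q ^ 2 ≠ 0 := by
  contrapose! h
  field_simp
  linear_combination h

lemma Rb_inv {q ζ : ℂ} (hζ : ζ ≠ 0) (h : 1 - ζ⁻¹ ^ 2 * q ^ 2 ≠ 0) :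
    Rb q ζ⁻¹ = (ζ ^ 2 - 1) * q / (ζ ^ 2 - q ^ 2) := by
  rw [Rb, div_eq_div_iff h (one_sub_inv_sq_mul_sq_ne_zero hζ h)]
  field_simp

lemma Rc_inv {q ζ : ℂ} (hζ : ζ ≠ 0) (h : 1 - ζ⁻¹ ^ 2 * q ^ 2 ≠ 0) :
    Rc q ζ⁻¹ = (1 - q ^ 2) * ζ / (ζ ^ 2 - q ^ 2) := by
  rw [Rc, div_eq_div_iff h (one_sub_inv_sq_mul_sq_ne_zero hζ h)]
  field_simp

lemma Rmat_mul_Rmat_inv {q ζ : ℂ} (hζ : ζ ≠ 0) (h : 1 - ζ ^ 2 * q ^ 2 ≠ 0)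
    (h' : 1 - ζ⁻¹ ^ 2 * q ^ 2 ≠ 0) : Rmat q ζ * Rmat q ζ⁻¹ = 1 := by
  have hden := one_sub_inv_sq_mul_sq_ne_zero hζ h'
  apply Rmat_mul_Rmat_eq_one <;>
    · rw [Rb_inv hζ h', Rc_inv hζ h', Rb, Rc]
      field_simp
      ring

lemma S0_mul_S0_inv {q ζ : ℂ} (hζ : ζ ≠ 0)
    (hd1 : qPoch (ζ ^ 2) (q ^ 4) ≠ 0) (hd2 : qPoch ((ζ ^ 2)⁻¹ * q ^ 2) (q ^ 4) ≠ 0)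
    (hd3 : qPoch ((ζ⁻¹) ^ 2) (q ^ 4) ≠ 0) (hd4 : qPoch (((ζ⁻¹) ^ 2)⁻¹ * q ^ 2) (q ^ 4) ≠ 0) :
    S0 q ζ * S0 q ζ⁻¹ = 1 := by
  simp only [inv_pow, inv_inv] at hd3 hd4
  simp only [S0, inv_pow, inv_inv]
  rw [div_mul_div_comm,
    div_eq_one_iff_eq (mul_ne_zero (mul_ne_zero hd1 hd2) (mul_ne_zero hd3 hd4))]
  field_simp

theorem S_unitarity_general (q : ℂ)
    (ζ : ℂ) (hζ : ζ ≠ 0)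
    (hd1 : qPoch (ζ ^ 2) (q ^ 4) ≠ 0)
    (hd2 : qPoch ((ζ ^ 2)⁻¹ * q ^ 2) (q ^ 4) ≠ 0)
    (hd3 : qPoch ((ζ⁻¹) ^ 2) (q ^ 4) ≠ 0)
    (hd4 : qPoch (((ζ⁻¹) ^ 2)⁻¹ * q ^ 2) (q ^ 4) ≠ 0)
    (hr1 : 1 - ζ ^ 2 * q ^ 2 ≠ 0) (hr2 : 1 - (ζ⁻¹) ^ 2 * q ^ 2 ≠ 0) :
    Smat q ζ * (Pmat * Smat q ζ⁻¹ * Pmat) = 1 ∧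
      Rmat q ζ * (Pmat * Rmat q ζ⁻¹ * Pmat) = 1 := by
  have hR := Rmat_mul_Rmat_inv hζ hr1 hr2
  refine ⟨?_, by rw [Pmat_mul_Rmat_mul_Pmat, hR]⟩
  rw [Pmat_mul_Smat_mul_Pmat, Smat, Smat, Matrix.smul_mul, Matrix.mul_smul, smul_smul, hR,
    S0_mul_S0_inv hζ hd1 hd2 hd3 hd4, one_smul]

/-- Unitarity of the scattering matrix: `S₁₂(ζ) S₂₁(ζ⁻¹) = 1` where
`S₂₁(ζ) = P S(ζ) P`; in particular `R(ζ) (P R(ζ⁻¹) P) = 1`. -/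
theorem S_unitarity (q : ℂ) (hq0 : 0 < ‖q‖) (hq1 : ‖q‖ < 1)
    (ζ : ℂ) (hζ : ζ ≠ 0)
    (hd1 : qPoch (ζ ^ 2) (q ^ 4) ≠ 0)
    (hd2 : qPoch ((ζ ^ 2)⁻¹ * q ^ 2) (q ^ 4) ≠ 0)
    (hd3 : qPoch ((ζ⁻¹) ^ 2) (q ^ 4) ≠ 0)
    (hd4 : qPoch (((ζ⁻¹) ^ 2)⁻¹ * q ^ 2) (q ^ 4) ≠ 0)
    (hr1 : 1 - ζ ^ 2 * q ^ 2 ≠ 0) (hr2 : 1 - (ζ⁻¹) ^ 2 * q ^ 2 ≠ 0) :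
    Smat q ζ * (Pmat * Smat q ζ⁻¹ * Pmat) = 1 ∧
      Rmat q ζ * (Pmat * Rmat q ζ⁻¹ * Pmat) = 1 :=
  S_unitarity_general q ζ hζ hd1 hd2 hd3 hd4 hr1 hr2
end
end

section
/- The function t(ζ) = ζ⁻¹ θ(qζ²|q⁴)/θ(qζ⁻²|q⁴) satisfies t(ζ) · t(−σqζ) = σ for every σ ∈ {+1,−1} and every ζ ∈ ℂ∖{0} such that the theta functions in the denominators are nonzero. -/
/-! Two functional equations of `θ(z|p)` do all the work: it is invariant under `z ↦ p/z`, and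
`θ(pz|p) = -z⁻¹ θ(z|p)` by `(a;p)_∞ = (1-a)(ap;p)_∞`. With `p = q⁴` they turn the denominator
`θ(qζ⁻²)` of `t(ζ)` into `θ(q³ζ²)`, and for `w² = q²ζ²` the quotient defining `t(w)` into
`-qζ² θ(q³ζ²)/θ(qζ²)`. Hence all theta factors cancel and `t(ζ) t(w) = -qζ/w`, which is `σ`
for `w = -σqζ`. -/

noncomputable section

open scoped BigOperators

section Theta

variable {p : ℂ}

lemma multipliable_one_sub_mul_pow (a : ℂ) (hp : ‖p‖ < 1) :
    Multipliable fun k : ℕ => 1 - a * p ^ k := by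
  have hsum : Summable fun k : ℕ => ‖-(a * p ^ k)‖ := by
    simp only [norm_neg, norm_mul, norm_pow]
    exact (summable_geometric_of_lt_one (norm_nonneg p) hp).mul_left ‖a‖
  simpa only [sub_eq_add_neg] using multipliable_one_add_of_summable (R := ℂ) hsum

lemma qPoch_eq_one_sub_mul_qPoch (a : ℂ) (hp : ‖p‖ < 1) :
    qPoch a p = (1 - a) * qPoch (a * p) p := by
  have hshift (k : ℕ) : a * p ^ (k + 1) = a * p * p ^ k := by ring
  have hm : Multipliable fun k : ℕ => 1 - a * p ^ (k + 1) := by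
    simpa only [hshift] using multipliable_one_sub_mul_pow (a * p) hp
  unfold qPoch
  rw [tprod_eq_zero_mul' (f := fun k : ℕ => 1 - a * p ^ k) hm, pow_zero, mul_one]
  simp only [hshift]

lemma theta_div_self (z : ℂ) (hp : p ≠ 0) : theta (p / z) p = theta z p := by
  rw [theta, theta, div_div_cancel₀ hp, mul_comm]

lemma theta_mul_self (z : ℂ) (hz : z ≠ 0) (hp₀ : p ≠ 0) (hp : ‖p‖ < 1) :
    theta (p * z) p = -z⁻¹ * theta z p := by
  have hinv : (1 : ℂ) - z⁻¹ = -z⁻¹ * (1 - z) := by field_simp; ring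
  rw [theta, theta, div_mul_cancel_left₀ hp₀, qPoch_eq_one_sub_mul_qPoch z hp,
    qPoch_eq_one_sub_mul_qPoch z⁻¹ hp, hinv, mul_comm p z, ← div_eq_inv_mul]
  ring

end Theta

lemma theta_q_mul_inv_sq (q ζ : ℂ) (hq : q ≠ 0) (hζ : ζ ≠ 0) :
    theta (q * (ζ ^ 2)⁻¹) (q ^ 4) = theta (q ^ 3 * ζ ^ 2) (q ^ 4) := by
  rw [← theta_div_self _ (by positivity)]
  congr 1
  field_simp

lemma theta_q_mul_inv_q_sq_mul_sq (q ζ : ℂ) (hq : q ≠ 0) (hq₁ : ‖q‖ < 1) (hζ : ζ ≠ 0) :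
    theta (q * (q ^ 2 * ζ ^ 2)⁻¹) (q ^ 4) = -(q * ζ ^ 2)⁻¹ * theta (q * ζ ^ 2) (q ^ 4) := by
  have hp : ‖q ^ 4‖ < 1 := by rw [norm_pow]; exact pow_lt_one₀ (norm_nonneg q) hq₁ (by norm_num)
  rw [← theta_mul_self _ (by positivity) (by positivity) hp,
    ← theta_div_self (q ^ 4 * (q * ζ ^ 2)) (by positivity)]
  congr 1
  field_simp

lemma tfun_mul_tfun_of_sq_eq (q ζ w : ℂ) (hq : q ≠ 0) (hq₁ : ‖q‖ < 1) (hζ : ζ ≠ 0)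
    (hw : w ^ 2 = q ^ 2 * ζ ^ 2) (hζ' : theta (q * (ζ ^ 2)⁻¹) (q ^ 4) ≠ 0)
    (hw' : theta (q * (w ^ 2)⁻¹) (q ^ 4) ≠ 0) :
    tfun q ζ * tfun q w = -q * ζ / w := by
  have hw₀ : w ≠ 0 := by rintro rfl; simp [hq, hζ] at hw
  rw [hw, theta_q_mul_inv_q_sq_mul_sq q ζ hq hq₁ hζ] at hw'
  rw [theta_q_mul_inv_sq q ζ hq hζ] at hζ'
  have hθ : theta (q * ζ ^ 2) (q ^ 4) ≠ 0 := right_ne_zero_of_mul hw'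
  rw [tfun, tfun, hw, theta_q_mul_inv_q_sq_mul_sq q ζ hq hq₁ hζ, theta_q_mul_inv_sq q ζ hq hζ,
    show q * (q ^ 2 * ζ ^ 2) = q ^ 3 * ζ ^ 2 by ring]
  generalize theta (q * ζ ^ 2) (q ^ 4) = X at hθ ⊢
  generalize theta (q ^ 3 * ζ ^ 2) (q ^ 4) = Y at hζ' ⊢
  field_simp

/-- `t(ζ) t(−σqζ) = σ` for `σ = ±1`, where
`t(ζ) = ζ⁻¹ θ(qζ²|q⁴)/θ(qζ⁻²|q⁴)`. -/
theorem tfun_relation (q : ℂ) (hq0 : 0 < ‖q‖) (hq1 : ‖q‖ < 1)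
    (σ : ℂ) (hσ : σ = 1 ∨ σ = -1) (ζ : ℂ) (hζ : ζ ≠ 0)
    (h1 : theta (q * (ζ ^ 2)⁻¹) (q ^ 4) ≠ 0)
    (h2 : theta (q * ((-σ * q * ζ) ^ 2)⁻¹) (q ^ 4) ≠ 0) :
    tfun q ζ * tfun q (-σ * q * ζ) = σ := by
  have hq : q ≠ 0 := norm_pos_iff.mp hq0
  have hσ₂ : σ ^ 2 = 1 := by rcases hσ with rfl | rfl <;> norm_num
  have hσ₀ : σ ≠ 0 := by rintro rfl; norm_num at hσ₂
  rw [tfun_mul_tfun_of_sq_eq q ζ _ hq hq1 hζ (by linear_combination q ^ 2 * ζ ^ 2 * hσ₂) h1 h2]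
  field_simp
  exact hσ₂.symm
end
end

section
/- The q-KZ equation follows from the first two axioms: let N ≥ 2, let r : ℂ∖{0} → ℂ be any function, let δ ∈ ℂ∖{0}, D = diag(δ, δ⁻¹) ∈ End(V), and let G : (ℂ∖{0})^N → V^{⊗N} be a function such that, for all admissible arguments, (i) P_{j,j+1} G(…, ζ_{j+1}, ζ_j, …) = S_{j,j+1}(ζ_j/ζ_{j+1}) G(…, ζ_j, ζ_{j+1}, …) for every 1 ≤ j ≤ N−1, and (ii) P₁₂ ⋯ P_{N−1,N} G(ζ₂, …, ζ_N, ζ₁q⁻²) = r(ζ₁) D₁ G(ζ₁, …, ζ_N). Then for all admissible arguments, P_{N−1,N} G(ζ₁, …, ζ_{N−2}, ζ_{N−1}, ζ_N) = r(ζ_N q²) D_{N−1} S_{1,…,N−2|N−1}(ζ₁, …, ζ_{N−2} | ζ_N q²) G(ζ₁, …, ζ_{N−2}, ζ_N q², ζ_{N−1}). -/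
noncomputable section

open scoped BigOperators

/-!
Write `w = ζ_N q²`. Deformed cyclicity, applied at `(w, ζ₁, …, ζ_{N-1})`, expresses
`G(ζ₁, …, ζ_N)` through `G(w, ζ₁, …, ζ_{N-1})` up to the cyclic shift `P₁₂ ⋯ P_{N-1,N}` of the
tensor factors. Moving `w` from the first slot to slot `N-1` by `N-2` successive applications of
S-matrix symmetry produces `S_{1,…,N-2|N-1}(ζ₁, …, ζ_{N-2} | w)`. All the transpositions are
permutation matrices of the tensor factors, which intertwine the embedded operators; in
particular they carry `D₁` to `D_{N-1}`, and what is left of the cyclic shift is `P_{N-1,N}`.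
-/

open scoped Matrix

theorem SemiconjBy.list_prod_ofFn {M : Type*} [Monoid M] {a : M} {n : ℕ} {f g : Fin n → M}
    (h : ∀ i, SemiconjBy a (f i) (g i)) :
    SemiconjBy a (List.ofFn f).prod (List.ofFn g).prod := by
  induction n with
  | zero => exact SemiconjBy.one_right a
  | succ n ih =>
    simp only [List.ofFn_succ, List.prod_cons]
    exact (h 0).mul_right (ih fun i => h i.succ)

section TensorPerm

variable {ι β : Type*} [Fintype ι] [DecidableEq ι] [Fintype β] [DecidableEq β]

/-- The operator `v ↦ (a ↦ v (a ∘ σ))` permuting the tensor factors of `(ι → β) → ℂ`. -/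
def tensorPerm : Equiv.Perm ι →* Matrix (ι → β) (ι → β) ℂ where
  toFun σ := (σ.symm.arrowCongr (Equiv.refl β)).toPEquiv.toMatrix
  map_one' := by
    rw [show (1 : Equiv.Perm ι).symm.arrowCongr (Equiv.refl β) = Equiv.refl _ from rfl,
      Equiv.toPEquiv_refl, PEquiv.toMatrix_refl]
  map_mul' σ τ := by
    rw [← PEquiv.toMatrix_trans, ← Equiv.toPEquiv_trans]
    rfl

theorem tensorPerm_apply (σ : Equiv.Perm ι) (a b : ι → β) :
    (tensorPerm σ : Matrix (ι → β) (ι → β) ℂ) a b = if a ∘ σ = b then 1 else 0 := by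
  simp only [tensorPerm, MonoidHom.coe_mk, OneHom.coe_mk, PEquiv.toMatrix_apply,
    Equiv.toPEquiv_apply, Option.mem_def, Option.some.injEq]
  rfl

theorem tensorPerm_mul (σ : Equiv.Perm ι) (X : Matrix (ι → β) (ι → β) ℂ) :
    tensorPerm σ * X = X.submatrix (· ∘ σ) id :=
  PEquiv.toMatrix_toPEquiv_mul _ X

theorem mul_tensorPerm (σ : Equiv.Perm ι) (X : Matrix (ι → β) (ι → β) ℂ) :
    X * tensorPerm σ = X.submatrix id (· ∘ σ.symm) :=
  PEquiv.mul_toMatrix_toPEquiv X _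

end TensorPerm

section Embed

variable {N : ℕ}

theorem embed2_apply (M : Matrix (Fin 2 × Fin 2) (Fin 2 × Fin 2) ℂ) (j k : Fin N)
    (a b : Fin N → Fin 2) :
    embed2 M j k a b = if ∀ i, i ≠ j → i ≠ k → a i = b i then M (a j, a k) (b j, b k) else 0 := by
  simp only [embed2, Matrix.of_apply, ← ite_or, Fintype.prod_boole, mul_ite, mul_one, mul_zero]
  congr 1
  exact propext <| forall_congr' fun i => by tauto

theorem embed2_Pmat (j k : Fin N) : embed2 Pmat j k = tensorPerm (Equiv.swap j k) := by
  ext a b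
  simp only [embed2_apply, tensorPerm_apply, Pmat, Matrix.of_apply, Prod.mk.injEq, ← ite_and]
  congr 1
  refine propext ⟨fun ⟨hb, hj, hk⟩ => funext fun i => ?_, ?_⟩
  · rw [Function.comp_apply, Equiv.swap_apply_def]
    split_ifs with hij hik
    · rw [hij, hj]
    · rw [hik, hk]
    · exact hb i hij hik
  · rintro rfl
    refine ⟨fun i hij hik => ?_, by simp, by simp⟩
    simp [Equiv.swap_apply_of_ne_of_ne hij hik]

theorem tensorPerm_mul_embed2 (σ : Equiv.Perm (Fin N))
    (M : Matrix (Fin 2 × Fin 2) (Fin 2 × Fin 2) ℂ) (j k : Fin N) :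
    tensorPerm σ * embed2 M j k = embed2 M (σ j) (σ k) * tensorPerm σ := by
  rw [tensorPerm_mul, mul_tensorPerm]
  ext a b
  simp only [embed2, Matrix.submatrix_apply, Matrix.of_apply, id, Function.comp_apply,
    Equiv.symm_apply_apply]
  congr 1
  exact Fintype.prod_equiv σ _ _ fun i => by simp

theorem tensorPerm_mul_embed1 (σ : Equiv.Perm (Fin N)) (M : Matrix (Fin 2) (Fin 2) ℂ)
    (j : Fin N) : tensorPerm σ * embed1 M j = embed1 M (σ j) * tensorPerm σ := by
  rw [tensorPerm_mul, mul_tensorPerm]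
  ext a b
  simp only [embed1, Matrix.submatrix_apply, Matrix.of_apply, id, Function.comp_apply,
    Equiv.symm_apply_apply]
  congr 1
  exact Fintype.prod_equiv σ _ _ fun i => by simp

def embed2Chain (M : ℕ → Matrix (Fin 2 × Fin 2) (Fin 2 × Fin 2) ℂ) (n : ℕ) (hn : n ≤ N)
    (k : Fin N) : Matrix (Fin N → Fin 2) (Fin N → Fin 2) ℂ :=
  (List.ofFn fun t : Fin n => embed2 (M t) ⟨t, by omega⟩ k).prod

theorem embed2Chain_succ (M : ℕ → Matrix (Fin 2 × Fin 2) (Fin 2 × Fin 2) ℂ) {n : ℕ}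
    (hn : n + 1 ≤ N) (k : Fin N) :
    embed2Chain M (n + 1) hn k = embed2Chain M n (by omega) k * embed2 (M n) ⟨n, hn⟩ k := by
  rw [embed2Chain, List.ofFn_succ', List.prod_concat]
  rfl

theorem tensorPerm_mul_embed2Chain {σ : Equiv.Perm (Fin N)}
    (M : ℕ → Matrix (Fin 2 × Fin 2) (Fin 2 × Fin 2) ℂ) {n : ℕ} (hn : n ≤ N)
    (hσ : ∀ t (ht : t < n), σ ⟨t, by omega⟩ = ⟨t, by omega⟩) (k : Fin N) :
    tensorPerm σ * embed2Chain M n hn k = embed2Chain M n hn (σ k) * tensorPerm σ :=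
  SemiconjBy.list_prod_ofFn fun t => by
    rw [SemiconjBy, tensorPerm_mul_embed2, hσ t t.2]

theorem SchainUp_eq_embed2Chain (q : ℂ) (ζ : ℕ → ℂ) (w : ℂ) (hN : 2 ≤ N) :
    SchainUp q N ζ w = embed2Chain (fun t => Smat q (ζ t / w)) (N - 2) (N.sub_le 2)
      ⟨N - 2, N.sub_lt (Nat.zero_lt_of_lt hN) two_pos⟩ :=
  rfl

end Embed

section SwapChain

variable {N : ℕ}

def swapChain (k : ℕ) (hk : k < N) : Equiv.Perm (Fin N) :=
  (List.ofFn fun t : Fin k => Equiv.swap (⟨t, by omega⟩ : Fin N) ⟨t + 1, by omega⟩).prod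

theorem swapChain_succ {k : ℕ} (hk : k + 1 < N) :
    swapChain (k + 1) hk =
      swapChain k (Nat.lt_of_succ_lt hk) * Equiv.swap ⟨k, Nat.lt_of_succ_lt hk⟩ ⟨k + 1, hk⟩ := by
  rw [swapChain, List.ofFn_succ', List.prod_concat]
  rfl

theorem swapChain_apply_self {k : ℕ} (hk : k < N) : swapChain k hk ⟨k, hk⟩ = ⟨0, by omega⟩ := by
  induction k with
  | zero => rfl
  | succ k ih =>
    rw [swapChain_succ, Equiv.Perm.mul_apply, Equiv.swap_apply_right, ih]

theorem Pchain_eq (hN : 2 ≤ N) :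
    Pchain N = tensorPerm (swapChain (N - 2) (N.sub_lt (Nat.zero_lt_of_lt hN) two_pos)) *
      embed2 Pmat ⟨N - 2, N.sub_lt (Nat.zero_lt_of_lt hN) two_pos⟩
        ⟨N - 1, N.sub_lt (Nat.zero_lt_of_lt hN) one_pos⟩ := by
  rw [Pchain, List.ofFn_congr (show N - 1 = N - 2 + 1 by omega), List.ofFn_succ',
    List.prod_concat, swapChain, map_list_prod, List.map_ofFn]
  congr 1
  · exact congrArg _ (congrArg _ (funext fun t => embed2_Pmat _ _))
  · congr 2
    rw [Fin.val_cast, Fin.val_last]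
    omega

end SwapChain

section Exchange

variable {N : ℕ}

def insertAt (ζ : ℕ → ℂ) (w : ℂ) (k i : ℕ) : ℂ :=
  if i < k then ζ i else if i = k then w else ζ (i - 1)

theorem insertAt_ne_zero {ζ : ℕ → ℂ} {w : ℂ} (hζ : ∀ i < N - 1, ζ i ≠ 0) (hw : w ≠ 0)
    {k : ℕ} (hk : k < N) : ∀ i < N, insertAt ζ w k i ≠ 0 := by
  intro i hi
  unfold insertAt
  split_ifs
  · exact hζ i (by omega)
  · exact hw
  · exact hζ (i - 1) (by omega)

def HasSMatrixSymmetry (q : ℂ) (G : (Fin N → ℂ) → (Fin N → Fin 2) → ℂ) : Prop :=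
  ∀ (ζ : ℕ → ℂ) (j : ℕ) (hj : j + 1 < N), (∀ i < N, ζ i ≠ 0) →
    Sdef q (ζ j / ζ (j + 1)) →
    (embed2 Pmat ⟨j, Nat.lt_of_succ_lt hj⟩ ⟨j + 1, hj⟩).mulVec
        (G fun i => if i.1 = j then ζ (j + 1) else if i.1 = j + 1 then ζ j else ζ i.1)
      = (embed2 (Smat q (ζ j / ζ (j + 1))) ⟨j, Nat.lt_of_succ_lt hj⟩ ⟨j + 1, hj⟩).mulVec
          (G fun i => ζ i.1)

variable {q : ℂ} {G : (Fin N → ℂ) → (Fin N → Fin 2) → ℂ} {ζ : ℕ → ℂ} {w : ℂ}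

theorem HasSMatrixSymmetry.exchange_insertAt (hG : HasSMatrixSymmetry q G)
    (hζ : ∀ i < N - 1, ζ i ≠ 0) (hw : w ≠ 0) {k : ℕ} (hk : k + 1 < N) (hS : Sdef q (ζ k / w)) :
    embed2 Pmat ⟨k, Nat.lt_of_succ_lt hk⟩ ⟨k + 1, hk⟩ *ᵥ G (fun i => insertAt ζ w k i) =
      embed2 (Smat q (ζ k / w)) ⟨k, Nat.lt_of_succ_lt hk⟩ ⟨k + 1, hk⟩ *ᵥ
        G (fun i => insertAt ζ w (k + 1) i) := by
  have hζk : insertAt ζ w (k + 1) k = ζ k := if_pos k.lt_succ_self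
  have hwk : insertAt ζ w (k + 1) (k + 1) = w := by simp [insertAt]
  have h := hG (insertAt ζ w (k + 1)) k hk (insertAt_ne_zero hζ hw hk) (by rwa [hζk, hwk])
  rw [hζk, hwk] at h
  convert h using 3
  funext i
  unfold insertAt
  split_ifs <;> first | rfl | omega | exact congrArg ζ (by omega)

theorem HasSMatrixSymmetry.tensorPerm_swapChain_inv_mulVec (hG : HasSMatrixSymmetry q G)
    (hζ : ∀ i < N - 1, ζ i ≠ 0) (hw : w ≠ 0) {k : ℕ} (hk : k < N)
    (hS : ∀ j < k, Sdef q (ζ j / w)) :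
    tensorPerm (swapChain k hk)⁻¹ *ᵥ G (fun i => insertAt ζ w 0 i) =
      embed2Chain (fun t => Smat q (ζ t / w)) k hk.le ⟨k, hk⟩ *ᵥ
        G (fun i => insertAt ζ w k i) := by
  induction k with
  | zero => simp [swapChain, embed2Chain]
  | succ k ih =>
    have hfix : ∀ t (ht : t < k),
        Equiv.swap (⟨k, Nat.lt_of_succ_lt hk⟩ : Fin N) ⟨k + 1, hk⟩ ⟨t, by omega⟩ = ⟨t, by omega⟩ :=
      fun t ht => Equiv.swap_apply_of_ne_of_ne (Fin.ne_of_val_ne ht.ne)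
        (Fin.ne_of_val_ne (Nat.lt_succ_of_lt ht).ne)
    rw [swapChain_succ, mul_inv_rev, Equiv.swap_inv, map_mul, ← Matrix.mulVec_mulVec,
      ih (by omega) fun j hj => hS j (by omega), Matrix.mulVec_mulVec,
      tensorPerm_mul_embed2Chain _ _ hfix, Equiv.swap_apply_left, ← Matrix.mulVec_mulVec,
      ← embed2_Pmat, hG.exchange_insertAt hζ hw hk (hS k k.lt_succ_self), Matrix.mulVec_mulVec,
      embed2Chain_succ]

end Exchange

/-- A function `G` with values in `V^{⊗N}` is evaluated on the tuple `(ζ 0, …, ζ (N-1))` of an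
arbitrary sequence `ζ : ℕ → ℂ`. -/
theorem qKZ_from_axioms (q : ℂ) (hq0 : 0 < ‖q‖)
    (N : ℕ) (hN : 2 ≤ N) (r : ℂ → ℂ) (δ : ℂ)
    (G : (Fin N → ℂ) → (Fin N → Fin 2) → ℂ)
    -- Axiom 1: S-matrix symmetry
    (hsym : ∀ (ζ : ℕ → ℂ) (j : ℕ) (hj : j + 1 < N), (∀ i < N, ζ i ≠ 0) →
      Sdef q (ζ j / ζ (j + 1)) →
      (embed2 Pmat ⟨j, by omega⟩ ⟨j + 1, hj⟩).mulVec
          (G fun i => if i.1 = j then ζ (j + 1) else if i.1 = j + 1 then ζ j else ζ i.1)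
        = (embed2 (Smat q (ζ j / ζ (j + 1))) ⟨j, by omega⟩ ⟨j + 1, hj⟩).mulVec
            (G fun i => ζ i.1))
    -- Axiom 2: deformed cyclicity
    (hcyc : ∀ ζ : ℕ → ℂ, (∀ i < N, ζ i ≠ 0) →
      (Pchain N).mulVec (G fun i => if i.1 = N - 1 then ζ 0 / q ^ 2 else ζ (i.1 + 1))
        = r (ζ 0) • (embed1 (Dmat δ) ⟨0, by omega⟩).mulVec (G fun i => ζ i.1)) :
    -- Conclusion: the q-KZ equation
    ∀ ζ : ℕ → ℂ, (∀ i < N, ζ i ≠ 0) →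
      (∀ j < N - 2, Sdef q (ζ j / (ζ (N - 1) * q ^ 2))) →
      (embed2 Pmat ⟨N - 2, by omega⟩ ⟨N - 1, by omega⟩).mulVec (G fun i => ζ i.1)
        = r (ζ (N - 1) * q ^ 2) •
            (embed1 (Dmat δ) ⟨N - 2, by omega⟩).mulVec
              ((SchainUp q N ζ (ζ (N - 1) * q ^ 2)).mulVec
                (G fun i => if i.1 = N - 2 then ζ (N - 1) * q ^ 2
                   else if i.1 = N - 1 then ζ (N - 2) else ζ i.1)) := by
  intro ζ hζ hS
  set w := ζ (N - 1) * q ^ 2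
  have hq : q ≠ 0 := norm_pos_iff.mp hq0
  have hw : w ≠ 0 := mul_ne_zero (hζ _ (by omega)) (pow_ne_zero 2 hq)
  have hζ' : ∀ i < N - 1, ζ i ≠ 0 := fun i hi => hζ i (by omega)
  have hcyc₀ : Pchain N *ᵥ G (fun i => ζ i.1) =
      r w • embed1 (Dmat δ) ⟨0, by omega⟩ *ᵥ G (fun i => insertAt ζ w 0 i) := by
    convert hcyc (insertAt ζ w 0) (insertAt_ne_zero hζ' hw (by omega)) using 3
    · funext i
      split_ifs with h
      · simp [insertAt, w, mul_div_cancel_right₀ _ (pow_ne_zero 2 hq), ← h]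
      · simp [insertAt]
    · simp [insertAt]
  have hmove := HasSMatrixSymmetry.tensorPerm_swapChain_inv_mulVec hsym hζ' hw (k := N - 2)
    (by omega) hS
  have hη : (fun i : Fin N => insertAt ζ w (N - 2) i) = fun i =>
      if i.1 = N - 2 then w else if i.1 = N - 1 then ζ (N - 2) else ζ i.1 := by
    funext i
    unfold insertAt
    split_ifs <;> first | rfl | omega | exact congrArg ζ (by omega)
  calc embed2 Pmat ⟨N - 2, by omega⟩ ⟨N - 1, by omega⟩ *ᵥ G (fun i => ζ i.1)
      = tensorPerm (swapChain (N - 2) (by omega))⁻¹ *ᵥ (Pchain N *ᵥ G (fun i => ζ i.1)) := by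
        rw [Pchain_eq hN, Matrix.mulVec_mulVec, ← mul_assoc, ← map_mul, inv_mul_cancel, map_one,
          one_mul]
    _ = r w • embed1 (Dmat δ) ⟨N - 2, by omega⟩ *ᵥ
          (tensorPerm (swapChain (N - 2) (by omega))⁻¹ *ᵥ G (fun i => insertAt ζ w 0 i)) := by
        rw [hcyc₀, Matrix.mulVec_smul, Matrix.mulVec_mulVec, Matrix.mulVec_mulVec,
          tensorPerm_mul_embed1, Equiv.Perm.inv_eq_iff_eq.mpr (swapChain_apply_self _).symm]
    _ = _ := by
        rw [hmove, hη, SchainUp_eq_embed2Chain q ζ w hN]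
end
end
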